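/- arXiv:2007.14422 — 4 statements merged into one kernel-verified Lean document; each statement's English description precedes it below -/
import Mathlib

section
/- The dot action of Sp₄(𝔽₂) is transitive on ordered syzygous triples and on ordered azygous triples of E: if (x,y,z) and (x',y',z') are triples of pairwise distinct elements of E which are both syzygous, or both azygous, then there exists M ∈ Sp₄(𝔽₂) with x ⊙ M = x', y ⊙ M = y' and z ⊙ M = z'. -/
open Matrix BigOperators

abbrev F2 : Type := ZMod 2
abbrev V4 : Type := Fin 4 → F2
abbrev M4 : Type := Matrix (Fin 4) (Fin 4) F2

/-- The standard symplectic matrix `J = [[0, I₂], [−I₂, 0]]` over `𝔽₂`. -/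
def J4 : M4 := !![0, 0, 1, 0; 0, 0, 0, 1; -1, 0, 0, 0; 0, -1, 0, 0]

/-- `M ∈ Sp₄(𝔽₂)`, i.e. `ᵀM·J·M = J`. -/
def IsSp4 (M : M4) : Prop := Mᵀ * J4 * M = J4

/-- The quadratic form `q₂(m) = m₁m₃ + m₂m₄`. -/
def q2 (m : V4) : F2 := m 0 * m 2 + m 1 * m 3

/-- The dot action `m ⊙ M := m·M − ((ᵀC·A)₀, (ᵀD·B)₀)` for `M = [[A,B],[C,D]]`:
the correction vector has `j`-th entry `M 2 j * M 0 j + M 3 j * M 1 j`, which is the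
`j`-th diagonal entry of `ᵀC·A` for `j = 0,1` and of `ᵀD·B` for `j = 2,3`. -/
def dotAct (m : V4) (M : M4) : V4 :=
  fun j => Matrix.vecMul m M j - (M 2 j * M 0 j + M 3 j * M 1 j)

/-- The set `E` of even theta characteristics: the isotropic vectors of `q₂`. -/
def Echar : Finset V4 := Finset.univ.filter (fun m => q2 m = 0)

/-- `e(x,y,z) := q₂(x)+q₂(y)+q₂(z)+q₂(x+y+z)`. -/
def eSyz (x y z : V4) : F2 := q2 x + q2 y + q2 z + q2 (x + y + z)

/-- A syzygous triple: three pairwise distinct elements of `E` with `e(x,y,z) = 0`. -/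
def IsSyzTriple (T : Finset V4) : Prop :=
  T ⊆ Echar ∧ T.card = 3 ∧
    ∀ x ∈ T, ∀ y ∈ T, ∀ z ∈ T, x ≠ y → x ≠ z → y ≠ z → eSyz x y z = 0

/-- An azygous triple: three pairwise distinct elements of `E` with `e(x,y,z) ≠ 0`. -/
def IsAzyTriple (T : Finset V4) : Prop :=
  T ⊆ Echar ∧ T.card = 3 ∧
    ∀ x ∈ T, ∀ y ∈ T, ∀ z ∈ T, x ≠ y → x ≠ z → y ≠ z → eSyz x y z ≠ 0

/-- A Göpel quadruple: four distinct elements of `E`, all of whose triples are syzygous. -/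
def IsGopel (Q : Finset V4) : Prop :=
  Q ⊆ Echar ∧ Q.card = 4 ∧
    ∀ x ∈ Q, ∀ y ∈ Q, ∀ z ∈ Q, x ≠ y → x ≠ z → y ≠ z → eSyz x y z = 0

/-- An azygous quadruple: four distinct elements of `E`, all of whose triples are azygous. -/
def IsAzyQuad (Q : Finset V4) : Prop :=
  Q ⊆ Echar ∧ Q.card = 4 ∧
    ∀ x ∈ Q, ∀ y ∈ Q, ∀ z ∈ Q, x ≠ y → x ≠ z → y ≠ z → eSyz x y z ≠ 0

def v0000 : V4 := ![0,0,0,0]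
def v0001 : V4 := ![0,0,0,1]
def v0010 : V4 := ![0,0,1,0]
def v0011 : V4 := ![0,0,1,1]
def v0100 : V4 := ![0,1,0,0]
def v0110 : V4 := ![0,1,1,0]
def v1000 : V4 := ![1,0,0,0]
def v1001 : V4 := ![1,0,0,1]
def v1100 : V4 := ![1,1,0,0]
def v1111 : V4 := ![1,1,1,1]

/-- A `k`-point of the Satake compactification `A₂(2)ˢ ⊆ ℙ⁹`: a tuple `(x_m)_{m ∈ E}`
satisfying the five linear equations and the quartic equation. -/
def IsA22Point {k : Type*} [Field k] (x : V4 → k) : Prop :=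
  x v1000 - x v1100 + x v1111 - x v1001 = 0 ∧
  x v0000 - x v0001 - x v0110 - x v1100 = 0 ∧
  x v0110 - x v0010 - x v1111 + x v0011 = 0 ∧
  x v0100 - x v0000 + x v1001 + x v0011 = 0 ∧
  x v0100 - x v1000 + x v0001 - x v0010 = 0 ∧
  (∑ m ∈ Echar, (x m) ^ 2) ^ 2 - 4 * ∑ m ∈ Echar, (x m) ^ 4 = 0

lemma Echar_nonempty : Echar.Nonempty := ⟨v0000, by decide⟩

/-- An absolute value on a field `K`. -/
def IsAbsValue {K : Type*} [Field K] (v : K → ℝ) : Prop :=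
  (∀ a, 0 ≤ v a) ∧ (∀ a, v a = 0 ↔ a = 0) ∧
    (∀ a b, v (a * b) = v a * v b) ∧ (∀ a b, v (a + b) ≤ v a + v b)

/-- A nonarchimedean absolute value on a field `K`. -/
def IsNonarchAbsValue {K : Type*} [Field K] (v : K → ℝ) : Prop :=
  IsAbsValue v ∧ ∀ a b, v (a + b) ≤ max (v a) (v b)

/-- An absolute value induced by a field embedding into `ℂ`. -/
def IsComplexEmbAbsValue {K : Type*} [Field K] (v : K → ℝ) : Prop :=
  ∃ σ : K →+* ℂ, ∀ a, v a = ‖σ a‖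


/-!
Writing `c_M := 0 ⊙ M`, the dot action is affine: `m ⊙ M = m·M + c_M`. Since the rows of a
symplectic `M` are again a symplectic basis, `q₂(m·M) = q₂(m) + Σᵢ mᵢ q₂(Mᵢ)`, and the
correction term cancels this linear defect, leaving `q₂(m ⊙ M) = q₂(m) + q₂(c_M)`. As
`m ↦ m ⊙ M` is a bijection and `q₂` has 10 zeros but `q₂ + 1` only 6, `q₂(c_M) = 0`. So the
action preserves `E`, and, being affine in characteristic 2, also `e(x,y,z)`.

Transitivity then follows from a stabilizer chain: move `x` to `0000` (the action on `E` is
transitive), then `y` to `0001` inside the stabilizer of `0000`, then `z` to `(0, e, e+1, 0)`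
inside the stabilizer of both, where `e = e(x,y,z)` is the second coordinate of `z` once
`x = 0000` and `y = 0001`. Each step uses a short list of explicit symplectic matrices.
-/

lemma F2_mul_self (a : F2) : a * a = a := by fin_cases a <;> rfl

instance : DecidablePred IsSp4 := fun _ => inferInstanceAs (Decidable (_ = _))

lemma J4_mul_self : J4 * J4 = 1 := by decide

lemma isSp4_J4 : IsSp4 J4 := by decide

lemma IsSp4.mul {M N : M4} (hM : IsSp4 M) (hN : IsSp4 N) : IsSp4 (M * N) := by
  unfold IsSp4 at *
  calc (M * N)ᵀ * J4 * (M * N) = Nᵀ * (Mᵀ * J4 * M) * N := by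
        simp only [transpose_mul, Matrix.mul_assoc]
    _ = J4 := by rw [hM, hN]

def spInv (M : M4) : M4 := J4 * Mᵀ * J4

lemma spInv_mul {M : M4} (hM : IsSp4 M) : spInv M * M = 1 :=
  calc spInv M * M = J4 * (Mᵀ * J4 * M) := by simp only [spInv, Matrix.mul_assoc]
    _ = 1 := by rw [hM, J4_mul_self]

lemma mul_spInv {M : M4} (hM : IsSp4 M) : M * spInv M = 1 :=
  mul_eq_one_comm.mp (spInv_mul hM)

lemma IsSp4.mul_J4_mul_transpose {M : M4} (hM : IsSp4 M) : M * J4 * Mᵀ = J4 :=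
  calc M * J4 * Mᵀ = M * spInv M * J4 := by
        simp only [spInv, Matrix.mul_assoc, J4_mul_self, Matrix.mul_one]
    _ = J4 := by rw [mul_spInv hM, Matrix.one_mul]

lemma IsSp4.transpose {M : M4} (hM : IsSp4 M) : IsSp4 Mᵀ := by
  rw [IsSp4, transpose_transpose]
  exact hM.mul_J4_mul_transpose

lemma IsSp4.spInv {M : M4} (hM : IsSp4 M) : IsSp4 (spInv M) :=
  (isSp4_J4.mul hM.transpose).mul isSp4_J4

lemma q2_add (u v : V4) : q2 (u + v) = q2 u + q2 v + u ᵥ* J4 ⬝ᵥ v := by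
  revert u v; decide

lemma q2_vecMul_J4 (v : V4) : q2 (v ᵥ* J4) = q2 v := by
  revert v; decide

lemma q2_J4_apply (k : Fin 4) : q2 (J4 k) = 0 := by
  revert k; decide

lemma q2_vecMul {M : M4} (hM : M * J4 * Mᵀ = J4) (m : V4) :
    q2 (m ᵥ* M) = q2 m + m ⬝ᵥ fun i => q2 (M i) := by
  have H : ∀ i k, (M * J4 * Mᵀ) i k = J4 i k := fun i k => by rw [hM]
  have h01 := H 0 1; have h02 := H 0 2; have h03 := H 0 3
  have h12 := H 1 2; have h13 := H 1 3; have h23 := H 2 3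
  simp only [J4, ZMod.neg_eq_self_mod_two, Fin.isValue, mul_apply, transpose_apply, of_apply,
    cons_val', cons_val_fin_one, Fin.sum_univ_four, cons_val_zero, cons_val_one, cons_val, mul_zero,
    add_zero, mul_one, zero_add] at h01 h02 h03 h12 h13 h23
  simp only [q2, vecMul, dotProduct, Fin.sum_univ_four]
  linear_combination (norm := (simp only [q2]; ring_nf))
    q2 (M 0) * F2_mul_self (m 0) + q2 (M 1) * F2_mul_self (m 1) +
    q2 (M 2) * F2_mul_self (m 2) + q2 (M 3) * F2_mul_self (m 3) +
    m 0 * m 1 * h01 + m 0 * m 2 * h02 + m 0 * m 3 * h03 +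
    m 1 * m 2 * h12 + m 1 * m 3 * h13 + m 2 * m 3 * h23

lemma dotAct_zero (M : M4) : dotAct 0 M = fun j => q2 (Mᵀ j) := by
  funext j
  simp only [dotAct, zero_vecMul, Pi.zero_apply, zero_sub, CharTwo.neg_eq, q2, transpose_apply]
  ring

lemma dotAct_eq_vecMul_add (m : V4) (M : M4) : dotAct m M = m ᵥ* M + dotAct 0 M := by
  funext j
  simp [dotAct, sub_eq_add_neg]

lemma dotAct_one (m : V4) : dotAct m 1 = m := by
  funext j
  fin_cases j <;> simp [dotAct]

lemma dotAct_mul (m : V4) {M : M4} (hM : IsSp4 M) (N : M4) :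
    dotAct (dotAct m M) N = dotAct m (M * N) := by
  have H : ∀ i i', (Mᵀ * J4 * M) i i' = J4 i i' := fun i i' => by rw [hM]
  have h01 := H 0 1; have h02 := H 0 2; have h03 := H 0 3
  have h12 := H 1 2; have h13 := H 1 3; have h23 := H 2 3
  simp only [J4, ZMod.neg_eq_self_mod_two, Fin.isValue, mul_apply, transpose_apply, of_apply,
    cons_val', cons_val_fin_one, Fin.sum_univ_four, cons_val_zero, cons_val_one, cons_val, mul_zero,
    add_zero, mul_one, zero_add] at h01 h02 h03 h12 h13 h23
  funext j
  simp only [dotAct, vecMul, dotProduct, mul_apply, Fin.sum_univ_four]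
  linear_combination
    (M 2 0 * M 0 0 + M 3 0 * M 1 0) * F2_mul_self (N 0 j) +
    (M 2 1 * M 0 1 + M 3 1 * M 1 1) * F2_mul_self (N 1 j) +
    (M 2 2 * M 0 2 + M 3 2 * M 1 2) * F2_mul_self (N 2 j) +
    (M 2 3 * M 0 3 + M 3 3 * M 1 3) * F2_mul_self (N 3 j) +
    N 0 j * N 1 j * h01 + N 0 j * N 2 j * h02 + N 0 j * N 3 j * h03 +
    N 1 j * N 2 j * h12 + N 1 j * N 3 j * h13 + N 2 j * N 3 j * h23

lemma dotAct_dotAct_spInv {M : M4} (hM : IsSp4 M) (m : V4) :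
    dotAct (dotAct m M) (spInv M) = m := by
  rw [dotAct_mul m hM, mul_spInv hM, dotAct_one]

lemma dotAct_spInv_eq {M : M4} (hM : IsSp4 M) {u v : V4} (h : dotAct u M = v) :
    dotAct v (spInv M) = u :=
  h ▸ dotAct_dotAct_spInv hM u

lemma dotAct_injective {M : M4} (hM : IsSp4 M) : Function.Injective (dotAct · M) :=
  Function.LeftInverse.injective (g := (dotAct · (spInv M))) (dotAct_dotAct_spInv hM)

lemma q2_apply_eq_vecMul_J4_dotProduct {M : M4} (hM : IsSp4 M) (k : Fin 4) :
    q2 (M k) = M k ᵥ* J4 ⬝ᵥ dotAct 0 M := by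
  have h := q2_vecMul (by rw [transpose_transpose]; exact hM) (M k ᵥ* J4)
  rw [vecMul_vecMul, ← mul_apply_eq_vecMul, ← Matrix.mul_assoc, hM.mul_J4_mul_transpose,
    q2_J4_apply, q2_vecMul_J4, ← dotAct_zero] at h
  exact CharTwo.add_eq_zero.mp h.symm

lemma q2_dotAct_eq_add {M : M4} (hM : IsSp4 M) (m : V4) :
    q2 (dotAct m M) = q2 m + q2 (dotAct 0 M) := by
  have hrow : (M * J4) *ᵥ dotAct 0 M = fun k => q2 (M k) := by
    funext k
    rw [q2_apply_eq_vecMul_J4_dotProduct hM, mulVec, ← mul_apply_eq_vecMul]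
  rw [dotAct_eq_vecMul_add, q2_add, q2_vecMul hM.mul_J4_mul_transpose, vecMul_vecMul,
    ← dotProduct_mulVec, hrow, add_right_comm _ (q2 (dotAct 0 M)), CharTwo.add_cancel_right]

lemma card_Echar : Echar.card = 10 := by decide

lemma card_q2_eq_one : (Finset.univ.filter fun m : V4 => q2 m = 1).card = 6 := by decide

lemma q2_dotAct_zero {M : M4} (hM : IsSp4 M) : q2 (dotAct 0 M) = 0 := by
  by_contra h
  have hodd : Set.MapsTo (dotAct · M) Echar (Finset.univ.filter fun m : V4 => q2 m = 1) := by
    intro m hm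
    refine Finset.mem_filter.mpr ⟨Finset.mem_univ _, ?_⟩
    rw [q2_dotAct_eq_add hM, (Finset.mem_filter.mp hm).2, zero_add]
    exact Fin.eq_one_of_ne_zero _ h
  have := Finset.card_le_card_of_injOn _ hodd (dotAct_injective hM).injOn
  rw [card_Echar, card_q2_eq_one] at this
  omega

lemma q2_dotAct {M : M4} (hM : IsSp4 M) (m : V4) : q2 (dotAct m M) = q2 m := by
  rw [q2_dotAct_eq_add hM, q2_dotAct_zero hM, add_zero]

lemma dotAct_add_add (x y z : V4) (M : M4) :
    dotAct (x + y + z) M = dotAct x M + dotAct y M + dotAct z M := by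
  rw [dotAct_eq_vecMul_add (x + y + z), dotAct_eq_vecMul_add x, dotAct_eq_vecMul_add y,
    dotAct_eq_vecMul_add z, add_vecMul, add_vecMul]
  linear_combination (-dotAct 0 M) * CharTwo.two_eq_zero (R := V4)

lemma eSyz_dotAct {M : M4} (hM : IsSp4 M) (x y z : V4) :
    eSyz (dotAct x M) (dotAct y M) (dotAct z M) = eSyz x y z := by
  simp only [eSyz, ← dotAct_add_add, q2_dotAct hM]

def SpRel {ι : Type*} (t t' : ι → V4) : Prop :=
  ∃ M, IsSp4 M ∧ ∀ i, dotAct (t i) M = t' i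

namespace SpRel

variable {ι : Type*} {t t' t'' : ι → V4}

lemma of_isSp4 (t : ι → V4) {M : M4} (hM : IsSp4 M) : SpRel t fun i => dotAct (t i) M :=
  ⟨M, hM, fun _ => rfl⟩

lemma symm (h : SpRel t t') : SpRel t' t := by
  obtain ⟨M, hM, hMt⟩ := h
  exact ⟨spInv M, hM.spInv, fun i => dotAct_spInv_eq hM (hMt i)⟩

lemma trans (h : SpRel t t') (h' : SpRel t' t'') : SpRel t t'' := by
  obtain ⟨M, hM, hMt⟩ := h
  obtain ⟨N, hN, hNt⟩ := h'
  exact ⟨M * N, hM.mul hN, fun i => by rw [← dotAct_mul _ hM, hMt, hNt]⟩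

lemma apply_mem_Echar (h : SpRel t t') {i : ι} (hi : t i ∈ Echar) : t' i ∈ Echar := by
  obtain ⟨M, hM, hMt⟩ := h
  simp only [Echar, Finset.mem_filter, Finset.mem_univ, true_and] at hi ⊢
  rw [← hMt, q2_dotAct hM, hi]

lemma apply_ne_apply (h : SpRel t t') {i j : ι} (hij : t i ≠ t j) : t' i ≠ t' j := by
  obtain ⟨M, hM, hMt⟩ := h
  rw [← hMt, ← hMt]
  exact (dotAct_injective hM).ne hij

lemma eSyz_eq (h : SpRel t t') (i j k : ι) :
    eSyz (t' i) (t' j) (t' k) = eSyz (t i) (t j) (t k) := by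
  obtain ⟨M, hM, hMt⟩ := h
  rw [← hMt, ← hMt, ← hMt, eSyz_dotAct hM]

end SpRel

lemma exists_isSp4_dotAct_zero_eq {x : V4} (hx : x ∈ Echar) :
    ∃ A, IsSp4 A ∧ dotAct 0 A = x := by
  have key : ∀ x : V4, q2 x = 0 → ∃ A ∈ [
      !![0, 0, 0, 1; 0, 0, 1, 0; 0, 1, 0, 0; 1, 0, 0, 0],
      !![0, 1, 0, 1; 0, 0, 1, 0; 0, 0, 0, 1; 1, 0, 0, 0],
      !![1, 0, 1, 0; 0, 0, 0, 1; 0, 0, 1, 0; 0, 1, 0, 0],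
      !![0, 1, 0, 1; 1, 0, 1, 0; 0, 0, 0, 1; 0, 0, 1, 0],
      !![0, 1, 0, 1; 0, 0, 1, 0; 0, 1, 0, 0; 1, 0, 0, 0],
      !![1, 0, 1, 0; 0, 1, 0, 1; 0, 0, 1, 0; 0, 1, 0, 0],
      !![0, 0, 0, 1; 1, 0, 1, 0; 0, 1, 0, 0; 1, 0, 0, 0],
      !![0, 1, 0, 1; 1, 0, 1, 0; 0, 0, 0, 1; 1, 0, 0, 0],
      !![0, 1, 0, 1; 1, 0, 1, 0; 0, 1, 0, 0; 1, 0, 0, 0],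
      !![0, 1, 1, 1; 1, 1, 1, 0; 0, 0, 1, 1; 1, 1, 0, 0]],
      IsSp4 A ∧ dotAct 0 A = x := by
    decide
  obtain ⟨A, -, hA⟩ := key x (Finset.mem_filter.mp hx).2
  exact ⟨A, hA⟩

lemma exists_isSp4_fixing_zero_dotAct_v0001_eq {y : V4} (hy : y ∈ Echar) (hy0 : y ≠ 0) :
    ∃ B, IsSp4 B ∧ dotAct 0 B = 0 ∧ dotAct v0001 B = y := by
  have key : ∀ y : V4, q2 y = 0 → y ≠ 0 → ∃ B ∈ [
      !![0, 0, 1, 0; 0, 1, 0, 0; 1, 0, 0, 0; 0, 0, 0, 1],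
      !![0, 0, 0, 1; 1, 0, 0, 0; 0, 1, 0, 0; 0, 0, 1, 0],
      !![0, 0, 0, 1; 1, 0, 0, 0; 1, 1, 0, 0; 0, 0, 1, 1],
      !![0, 0, 1, 0; 0, 0, 0, 1; 1, 0, 0, 0; 0, 1, 0, 0],
      !![1, 0, 0, 1; 1, 0, 0, 0; 0, 1, 0, 0; 0, 1, 1, 0],
      !![0, 0, 0, 1; 0, 0, 1, 0; 0, 1, 0, 0; 1, 0, 0, 0],
      !![0, 1, 1, 0; 0, 1, 0, 0; 1, 0, 0, 0; 1, 0, 0, 1],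
      !![0, 0, 1, 1; 0, 0, 0, 1; 1, 0, 0, 0; 1, 1, 0, 0],
      !![1, 0, 0, 1; 1, 0, 0, 0; 1, 1, 0, 0; 1, 1, 1, 1]],
      IsSp4 B ∧ dotAct 0 B = 0 ∧ dotAct v0001 B = y := by
    decide
  obtain ⟨B, -, hB⟩ := key y (Finset.mem_filter.mp hy).2 hy0
  exact ⟨B, hB⟩

def thirdBase (e : F2) : V4 := ![0, e, e + 1, 0]

lemma exists_isSp4_fixing_zero_v0001_dotAct_thirdBase_eq {z : V4}
    (hz : z ∈ Echar) (hz0 : z ≠ 0) (hz1 : z ≠ v0001) :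
    ∃ C, IsSp4 C ∧ dotAct 0 C = 0 ∧ dotAct v0001 C = v0001 ∧ dotAct (thirdBase (z 1)) C = z := by
  have key : ∀ z : V4, q2 z = 0 → z ≠ 0 → z ≠ v0001 → ∃ C ∈ [
      !![1, 0, 0, 0; 0, 1, 0, 0; 0, 0, 1, 0; 0, 0, 0, 1],
      !![1, 0, 0, 0; 1, 1, 0, 0; 0, 0, 1, 1; 0, 0, 0, 1],
      !![0, 0, 1, 0; 0, 1, 0, 0; 1, 0, 0, 0; 0, 0, 0, 1],
      !![1, 0, 0, 1; 0, 1, 1, 0; 0, 0, 1, 0; 0, 0, 0, 1],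
      !![0, 0, 1, 0; 0, 1, 1, 0; 1, 0, 0, 1; 0, 0, 0, 1],
      !![0, 0, 1, 1; 1, 1, 0, 0; 1, 0, 0, 0; 0, 0, 0, 1],
      !![0, 0, 1, 1; 1, 1, 1, 1; 1, 0, 0, 1; 0, 0, 0, 1]],
      IsSp4 C ∧ dotAct 0 C = 0 ∧ dotAct v0001 C = v0001 ∧ dotAct (thirdBase (z 1)) C = z := by
    decide
  obtain ⟨C, -, hC⟩ := key z (Finset.mem_filter.mp hz).2 hz0 hz1
  exact ⟨C, hC⟩

section

variable {ι : Type*} (t : ι → V4)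

lemma exists_spRel_eq_zero {i : ι} (hi : t i ∈ Echar) : ∃ t', SpRel t t' ∧ t' i = 0 := by
  obtain ⟨A, hA, hAi⟩ := exists_isSp4_dotAct_zero_eq hi
  exact ⟨_, SpRel.of_isSp4 t hA.spInv, dotAct_spInv_eq hA hAi⟩

lemma exists_spRel_eq_zero_v0001 {i j : ι} (hi : t i = 0) (hj : t j ∈ Echar) (hj0 : t j ≠ 0) :
    ∃ t', SpRel t t' ∧ t' i = 0 ∧ t' j = v0001 := by
  obtain ⟨B, hB, hB0, hBj⟩ := exists_isSp4_fixing_zero_dotAct_v0001_eq hj hj0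
  refine ⟨_, SpRel.of_isSp4 t hB.spInv, ?_, dotAct_spInv_eq hB hBj⟩
  rw [hi]
  exact dotAct_spInv_eq hB hB0

lemma exists_spRel_eq_zero_v0001_thirdBase {i j k : ι} (hi : t i = 0) (hj : t j = v0001)
    (hk : t k ∈ Echar) (hk0 : t k ≠ 0) (hk1 : t k ≠ v0001) :
    ∃ t', SpRel t t' ∧ t' i = 0 ∧ t' j = v0001 ∧ t' k = thirdBase (t k 1) := by
  obtain ⟨C, hC, hC0, hC1, hCk⟩ := exists_isSp4_fixing_zero_v0001_dotAct_thirdBase_eq hk hk0 hk1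
  refine ⟨_, SpRel.of_isSp4 t hC.spInv, ?_, ?_, dotAct_spInv_eq hC hCk⟩
  · rw [hi]
    exact dotAct_spInv_eq hC hC0
  · rw [hj]
    exact dotAct_spInv_eq hC hC1

end

lemma eSyz_zero_v0001 (z : V4) : eSyz 0 v0001 z = z 1 := by
  revert z; decide

def normalTriple (e : F2) : Fin 3 → V4 := ![0, v0001, thirdBase e]

lemma spRel_normalTriple {x y z : V4} (hx : x ∈ Echar) (hy : y ∈ Echar) (hz : z ∈ Echar)
    (hxy : x ≠ y) (hxz : x ≠ z) (hyz : y ≠ z) :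
    SpRel ![x, y, z] (normalTriple (eSyz x y z)) := by
  obtain ⟨t₁, h₁, h₁0⟩ := exists_spRel_eq_zero ![x, y, z] (i := 0) hx
  obtain ⟨t₂, h₂, h₂0, h₂1⟩ := exists_spRel_eq_zero_v0001 t₁ h₁0 (h₁.apply_mem_Echar (i := 1) hy)
    (h₁0 ▸ (h₁.apply_ne_apply (i := 0) (j := 1) hxy).symm)
  have h₁₂ := h₁.trans h₂
  obtain ⟨t₃, h₃, h₃0, h₃1, h₃2⟩ := exists_spRel_eq_zero_v0001_thirdBase t₂ h₂0 h₂1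
    (h₁₂.apply_mem_Echar (i := 2) hz) (h₂0 ▸ (h₁₂.apply_ne_apply (i := 0) (j := 2) hxz).symm)
    (h₂1 ▸ (h₁₂.apply_ne_apply (i := 1) (j := 2) hyz).symm)
  have he : t₂ 2 1 = eSyz x y z := by
    have h := h₁₂.eSyz_eq 0 1 2
    rw [h₂0, h₂1, eSyz_zero_v0001] at h
    exact h
  have hnormal : t₃ = normalTriple (eSyz x y z) := by
    funext i
    fin_cases i
    · exact h₃0
    · exact h₃1
    · rw [← he]
      exact h₃2
  exact hnormal ▸ h₁₂.trans h₃

/-- the dot action is transitive on ordered syzygous triples and on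
ordered azygous triples of `E`. -/
theorem dotAct_transitive_on_triples (x y z x' y' z' : V4)
    (hx : x ∈ Echar) (hy : y ∈ Echar) (hz : z ∈ Echar)
    (hx' : x' ∈ Echar) (hy' : y' ∈ Echar) (hz' : z' ∈ Echar)
    (hxy : x ≠ y) (hxz : x ≠ z) (hyz : y ≠ z)
    (hxy' : x' ≠ y') (hxz' : x' ≠ z') (hyz' : y' ≠ z')
    (h : (eSyz x y z = 0 ∧ eSyz x' y' z' = 0) ∨ (eSyz x y z ≠ 0 ∧ eSyz x' y' z' ≠ 0)) :
    ∃ M : M4, IsSp4 M ∧ dotAct x M = x' ∧ dotAct y M = y' ∧ dotAct z M = z' := by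
  have he : eSyz x y z = eSyz x' y' z' := by
    rcases h with ⟨h, h'⟩ | ⟨h, h'⟩
    · rw [h, h']
    · rw [Fin.eq_one_of_ne_zero _ h, Fin.eq_one_of_ne_zero _ h']
  have hT := spRel_normalTriple hx hy hz hxy hxz hyz
  have hT' := spRel_normalTriple hx' hy' hz' hxy' hxz' hyz'
  obtain ⟨M, hM, hMt⟩ := hT.trans (he ▸ hT').symm
  exact ⟨M, hM, hMt 0, hMt 1, hMt 2⟩
end

section
/- For any two distinct elements x, y ∈ E, there are exactly 4 elements z ∈ E \ {x, y} such that {x, y, z} is a syzygous triple, and exactly 4 elements z ∈ E \ {x, y} such that {x, y, z} is an azygous triple. -/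
open Matrix BigOperators

/-! For `x, y, z ∈ E` the three terms `q₂(x), q₂(y), q₂(z)` vanish, so `e(x,y,z) = q₂(x+y+z)`:
the triple is syzygous exactly when `x + y + z ∈ E`. Both `z = x` and `z = y` satisfy this,
and for every `w ≠ 0` exactly 6 points `z ∈ E` have `w + z ∈ E` (a finite check over the 15
nonzero `w`). With `w = x + y` this leaves `6 - 2 = 4` syzygous and `10 - 6 = 4` azygous
completions. -/

lemma mem_Echar {m : V4} : m ∈ Echar ↔ q2 m = 0 := by
  simp [Echar]

lemma card_filter_add_mem_Echar {w : V4} (hw : w ≠ 0) :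
    (Echar.filter fun z => w + z ∈ Echar).card = 6 := by
  revert w
  decide

lemma eSyz_eq_q2_add_of_mem {x y z : V4} (hx : x ∈ Echar) (hy : y ∈ Echar) (hz : z ∈ Echar) :
    eSyz x y z = q2 (x + y + z) := by
  rw [mem_Echar] at hx hy hz
  simp [eSyz, hx, hy, hz]

lemma setOf_syzygous_completions {x y : V4} (hx : x ∈ Echar) (hy : y ∈ Echar) :
    {z : V4 | z ∈ Echar ∧ z ≠ x ∧ z ≠ y ∧ eSyz x y z = 0} =
      ↑(((Echar.filter fun z => x + y + z ∈ Echar).erase x).erase y) := by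
  ext z
  simp only [Set.mem_ofPred_eq, Finset.coe_erase, Finset.coe_filter, Set.mem_sdiff,
    Set.mem_singleton_iff]
  constructor
  · rintro ⟨hz, hzx, hzy, he⟩
    exact ⟨⟨⟨hz, by rwa [mem_Echar, ← eSyz_eq_q2_add_of_mem hx hy hz]⟩, hzx⟩, hzy⟩
  · rintro ⟨⟨⟨hz, hxyz⟩, hzx⟩, hzy⟩
    exact ⟨hz, hzx, hzy, by rwa [eSyz_eq_q2_add_of_mem hx hy hz, ← mem_Echar]⟩

lemma setOf_azygous_completions {x y : V4} (hx : x ∈ Echar) (hy : y ∈ Echar) :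
    {z : V4 | z ∈ Echar ∧ z ≠ x ∧ z ≠ y ∧ eSyz x y z ≠ 0} =
      ↑(Echar.filter fun z => x + y + z ∉ Echar) := by
  ext z
  simp only [Set.mem_ofPred_eq, Finset.coe_filter]
  constructor
  · rintro ⟨hz, -, -, he⟩
    exact ⟨hz, by rwa [mem_Echar, ← eSyz_eq_q2_add_of_mem hx hy hz]⟩
  · rintro ⟨hz, hxyz⟩
    refine ⟨hz, ?_, ?_, by rwa [eSyz_eq_q2_add_of_mem hx hy hz, Ne, ← mem_Echar]⟩
    · rintro rfl
      exact hxyz (by rwa [add_right_comm, CharTwo.add_self_eq_zero, zero_add])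
    · rintro rfl
      exact hxyz (by rwa [CharTwo.add_cancel_right])

/-- any two distinct elements of `E` can be completed into exactly 4
syzygous triples and exactly 4 azygous triples. -/
theorem completions_of_pair (x y : V4) (hx : x ∈ Echar) (hy : y ∈ Echar) (hxy : x ≠ y) :
    {z : V4 | z ∈ Echar ∧ z ≠ x ∧ z ≠ y ∧ eSyz x y z = 0}.ncard = 4 ∧
    {z : V4 | z ∈ Echar ∧ z ≠ x ∧ z ≠ y ∧ eSyz x y z ≠ 0}.ncard = 4 := by
  have hw : x + y ≠ 0 := fun h => hxy (CharTwo.add_eq_zero.mp h)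
  have hx_mem : x ∈ Echar.filter fun z => x + y + z ∈ Echar := by
    simpa [add_comm x y, CharTwo.add_cancel_right] using And.intro hx hy
  have hy_mem : y ∈ (Echar.filter fun z => x + y + z ∈ Echar).erase x :=
    Finset.mem_erase.mpr ⟨hxy.symm, by simpa [CharTwo.add_cancel_right] using And.intro hy hx⟩
  have hsplit := Finset.card_filter_add_card_filter_not (s := Echar) fun z => x + y + z ∈ Echar
  rw [setOf_syzygous_completions hx hy, setOf_azygous_completions hx hy,
    Set.ncard_coe_finset, Set.ncard_coe_finset, Finset.card_erase_of_mem hy_mem,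
    Finset.card_erase_of_mem hx_mem]
  rw [card_filter_add_mem_Echar hw, card_Echar] at hsplit
  rw [card_filter_add_mem_Echar hw]
  omega
end

section
/- Every syzygous triple in E is contained in exactly one Göpel quadruple, and every azygous triple in E is contained in exactly one azygous quadruple. -/
open Matrix BigOperators

/-! Since `e` is symmetric, a four-element set `{x, y, z, w}` has all its triples of type `c`
exactly when `e(x,y,z) = e(x,y,w) = e(x,z,w) = e(y,z,w) = c`. So everything rests on one fact:
three distinct `x, y, z ∈ E` with `e(x,y,z) = c` admit exactly one further `w ∈ E` completing
them in this sense (for syzygous triples `w = x + y + z`). As `E` has ten elements, this is a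
finite verification. -/

lemma eSyz_swap_left (x y z : V4) : eSyz y x z = eSyz x y z := by
  unfold eSyz; rw [add_comm y x]; ring

lemma eSyz_swap_right (x y z : V4) : eSyz x z y = eSyz x y z := by
  unfold eSyz; rw [add_right_comm x z y]; ring

def TriplesOfType (c : F2) (S : Finset V4) : Prop :=
  ∀ x ∈ S, ∀ y ∈ S, ∀ z ∈ S, x ≠ y → x ≠ z → y ≠ z → eSyz x y z = c

lemma triplesOfType_one_iff (S : Finset V4) :
    TriplesOfType 1 S ↔ ∀ x ∈ S, ∀ y ∈ S, ∀ z ∈ S, x ≠ y → x ≠ z → y ≠ z → eSyz x y z ≠ 0 := by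
  have h : ∀ a : F2, a = 1 ↔ a ≠ 0 := by decide
  simp only [TriplesOfType, h]

lemma triplesOfType_insert_iff {c : F2} {x y z w : V4} (hxy : x ≠ y) (hxz : x ≠ z) (hyz : y ≠ z)
    (hwx : w ≠ x) (hwy : w ≠ y) (hwz : w ≠ z) :
    TriplesOfType c {w, x, y, z} ↔
      eSyz x y z = c ∧ eSyz x y w = c ∧ eSyz x z w = c ∧ eSyz y z w = c := by
  constructor
  · intro h
    refine ⟨h x ?_ y ?_ z ?_ hxy hxz hyz, h x ?_ y ?_ w ?_ hxy hwx.symm hwy.symm,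
      h x ?_ z ?_ w ?_ hxz hwx.symm hwz.symm, h y ?_ z ?_ w ?_ hyz hwy.symm hwz.symm⟩ <;> simp
  · rintro ⟨h₀, h₁, h₂, h₃⟩ a ha b hb d hd hab had hbd
    simp only [Finset.mem_insert, Finset.mem_singleton] at ha hb hd
    grind [eSyz_swap_left, eSyz_swap_right]

def IsCompletion (c : F2) (x y z w : V4) : Prop :=
  w ∈ Echar ∧ w ≠ x ∧ w ≠ y ∧ w ≠ z ∧ eSyz x y w = c ∧ eSyz x z w = c ∧ eSyz y z w = c

instance (c : F2) (x y z w : V4) : Decidable (IsCompletion c x y z w) := by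
  unfold IsCompletion; infer_instance

theorem existsUnique_completion (c : F2) : ∀ x ∈ Echar, ∀ y ∈ Echar, ∀ z ∈ Echar,
    x ≠ y → x ≠ z → y ≠ z → eSyz x y z = c → ∃! w, IsCompletion c x y z w := by
  unfold ExistsUnique
  revert c
  decide +kernel

theorem existsUnique_quadruple_of_triple {c : F2} {T : Finset V4} (hTE : T ⊆ Echar)
    (hT : T.card = 3) (hTc : TriplesOfType c T) :
    ∃! Q : Finset V4, (Q ⊆ Echar ∧ Q.card = 4 ∧ TriplesOfType c Q) ∧ T ⊆ Q := by
  obtain ⟨x, y, z, hxy, hxz, hyz, rfl⟩ := Finset.card_eq_three.mp hT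
  have hx : x ∈ Echar := hTE (by simp)
  have hy : y ∈ Echar := hTE (by simp)
  have hz : z ∈ Echar := hTE (by simp)
  have hxyz : eSyz x y z = c := hTc x (by simp) y (by simp) z (by simp) hxy hxz hyz
  obtain ⟨w, ⟨hw, hwx, hwy, hwz, hxyw, hxzw, hyzw⟩, hw_unique⟩ :=
    existsUnique_completion c x hx y hy z hz hxy hxz hyz hxyz
  have hwT : w ∉ ({x, y, z} : Finset V4) := by simp [hwx, hwy, hwz]
  refine ⟨insert w {x, y, z}, ⟨⟨Finset.insert_subset hw hTE, ?_, ?_⟩, Finset.subset_insert _ _⟩, ?_⟩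
  · rw [Finset.card_insert_of_notMem hwT, hT]
  · exact (triplesOfType_insert_iff hxy hxz hyz hwx hwy hwz).2 ⟨hxyz, hxyw, hxzw, hyzw⟩
  rintro Q ⟨⟨hQE, hQ, hQc⟩, hTQ⟩
  obtain ⟨v, hvT, rfl⟩ := Finset.exists_eq_insert_iff.2 ⟨hTQ, by rw [hT, hQ]⟩
  simp only [Finset.mem_insert, Finset.mem_singleton, not_or] at hvT
  obtain ⟨hvx, hvy, hvz⟩ := hvT
  obtain ⟨-, hxyv, hxzv, hyzv⟩ := (triplesOfType_insert_iff hxy hxz hyz hvx hvy hvz).1 hQc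
  rw [hw_unique v ⟨hQE (Finset.mem_insert_self _ _), hvx, hvy, hvz, hxyv, hxzv, hyzv⟩]

/-- every syzygous triple is contained in exactly one Göpel quadruple,
and every azygous triple is contained in exactly one azygous quadruple. -/
theorem unique_quadruple_containing_triple :
    (∀ T : Finset V4, IsSyzTriple T → ∃! Q : Finset V4, IsGopel Q ∧ T ⊆ Q) ∧
    (∀ T : Finset V4, IsAzyTriple T → ∃! Q : Finset V4, IsAzyQuad Q ∧ T ⊆ Q) := by
  refine ⟨fun T ⟨hTE, hT, hTc⟩ => existsUnique_quadruple_of_triple hTE hT hTc,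
    fun T ⟨hTE, hT, hTc⟩ => ?_⟩
  simp only [IsAzyQuad, ← triplesOfType_one_iff]
  exact existsUnique_quadruple_of_triple hTE hT ((triplesOfType_one_iff T).2 hTc)
end

section
/- Let K be a number field, v a nonarchimedean absolute value on K, and x = (x_m)_{m∈E} a K-point of A₂(2)ˢ whose coordinates are not all zero; set M := max_{m'∈E} v(x_{m'}). Then the set {m ∈ E : v(x_m) < M} either has at most 4 elements or is contained in the complement in E of some Göpel quadruple. -/
open Matrix BigOperators

/-!
Each of the fifteen azygous quadruples `A` carries a Riemann relation `∑_{m ∈ A} ±x_m = 0`, a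
consequence of the five linear equations. In a vanishing sum a term of maximal nonarchimedean
absolute value is never alone, so the set `B` of coordinates with `v(x_m) = M` meets no azygous
quadruple in exactly one element. `B` is nonempty, and if more than four coordinates are small then
`|B| ≤ 5`; a finite check shows that such a set `B` is a Göpel quadruple.
-/

open Finset

section AbsoluteValue

variable {K : Type*} [Field K]

def IsAbsValue.toAbsoluteValue {v : K → ℝ} (hv : IsAbsValue v) : AbsoluteValue K ℝ where
  toFun := v
  map_mul' := hv.2.2.1
  nonneg' := hv.1
  eq_zero' := hv.2.1
  add_le' := hv.2.2.2

@[simp]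
theorem IsAbsValue.coe_toAbsoluteValue {v : K → ℝ} (hv : IsAbsValue v) :
    ⇑hv.toAbsoluteValue = v :=
  rfl

theorem IsNonarchimedean.exists_ne_le_of_sum_eq_zero {ι : Type*} {abv : AbsoluteValue K ℝ}
    (hna : IsNonarchimedean abv) {s : Finset ι} {g : ι → K} (hs : ∑ i ∈ s, g i = 0) {k : ι}
    (hk : k ∈ s) {M : ℝ} (hM : 0 < M) (hle : M ≤ abv (g k)) :
    ∃ j ∈ s, j ≠ k ∧ M ≤ abv (g j) := by
  by_contra! hlt
  have h := hna.apply_sum_eq_of_lt (fun a => (abv.map_neg a).symm) hk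
    fun j hj hjk => (hlt j hj hjk).trans_le hle
  rw [hs, map_zero] at h
  linarith

end AbsoluteValue

def evenChar : Fin 10 ↪ V4 :=
  ⟨![v0000, v0001, v0010, v0011, v0100, v0110, v1000, v1001, v1100, v1111], by decide⟩

theorem Echar_eq_map : Echar = univ.map evenChar := by
  decide

theorem ncard_setOf_mem_Echar (P : V4 → Prop) [DecidablePred P] :
    {m | m ∈ Echar ∧ P m}.ncard = #{i | P (evenChar i)} := by
  rw [← coe_filter, Set.ncard_coe_finset, Echar_eq_map, filter_map, card_map]
  rfl

/- Quadruples of indices into `evenChar`; lists rather than finsets keep the kernel checks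
below fast. -/

def azygousQuads : List (List (Fin 10)) :=
  [[0, 1, 4, 9], [0, 1, 5, 8], [0, 2, 6, 9], [0, 2, 7, 8], [0, 3, 4, 7],
    [0, 3, 5, 6], [1, 2, 4, 6], [1, 2, 5, 7], [1, 3, 6, 8], [1, 3, 7, 9],
    [2, 3, 4, 8], [2, 3, 5, 9], [4, 5, 6, 7], [4, 5, 8, 9], [6, 7, 8, 9]]

def gopelQuads : List (List (Fin 10)) :=
  [[0, 1, 2, 3], [0, 1, 6, 7], [0, 2, 4, 5], [0, 3, 8, 9], [0, 4, 6, 8],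
    [0, 5, 7, 9], [1, 2, 8, 9], [1, 3, 4, 5], [1, 4, 7, 8], [1, 5, 6, 9],
    [2, 3, 6, 7], [2, 4, 7, 9], [2, 5, 6, 8], [3, 4, 6, 9], [3, 5, 7, 8]]

set_option synthInstance.maxSize 1000 in
theorem isGopel_of_mem_gopelQuads :
    ∀ Q ∈ gopelQuads, IsGopel (Q.toFinset.map evenChar) := by
  unfold IsGopel
  rw [Echar_eq_map]
  decide

set_option synthInstance.maxSize 1000 in
theorem exists_gopelQuad_of_forall_azygousQuad : ∀ p : Fin 10 → Bool, (∃ i, p i) →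
    #{i | p i} ≤ 5 → (∀ A ∈ azygousQuads, ∀ i ∈ A, p i → ∃ j ∈ A, j ≠ i ∧ p j) →
    ∃ Q ∈ gopelQuads, ∀ i, p i ↔ i ∈ Q := by
  decide +kernel

section Point

variable {K : Type*} [Field K] [CharZero K] {x : V4 → K}

/- The entries of `ε` outside `A` play no role and are set to `1`. -/
theorem IsA22Point.exists_signed_sum_eq_zero (hx : IsA22Point x) :
    ∀ A ∈ azygousQuads, ∃ ε : Fin 10 → ℤˣ, ∑ i ∈ A.toFinset, ε i • x (evenChar i) = 0 := by
  obtain ⟨h1, h2, h3, h4, h5, -⟩ := hx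
  simp only [azygousQuads, List.mem_cons, List.not_mem_nil, or_false, forall_eq_or_imp,
    forall_eq]
  refine ⟨⟨![1, -1, 1, 1, -1, 1, 1, 1, 1, -1], ?_⟩,
    ⟨![1, -1, 1, 1, 1, -1, 1, 1, -1, 1], ?_⟩,
    ⟨![1, 1, -1, 1, 1, 1, -1, 1, 1, -1], ?_⟩,
    ⟨![1, 1, -1, 1, 1, 1, 1, -1, -1, 1], ?_⟩,
    ⟨![1, 1, 1, -1, -1, 1, 1, -1, 1, 1], ?_⟩,
    ⟨![1, 1, 1, -1, 1, -1, -1, 1, 1, 1], ?_⟩,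
    ⟨![1, 1, -1, 1, 1, 1, -1, 1, 1, 1], ?_⟩,
    ⟨![1, 1, -1, 1, 1, 1, 1, -1, 1, 1], ?_⟩,
    ⟨![1, 1, 1, -1, 1, 1, -1, 1, 1, 1], ?_⟩,
    ⟨![1, 1, 1, -1, 1, 1, 1, -1, 1, 1], ?_⟩,
    ⟨![1, 1, 1, -1, -1, 1, 1, 1, 1, 1], ?_⟩,
    ⟨![1, 1, 1, -1, 1, -1, 1, 1, 1, 1], ?_⟩,
    ⟨![1, 1, 1, 1, 1, -1, -1, 1, 1, 1], ?_⟩,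
    ⟨![1, 1, 1, 1, 1, -1, 1, 1, -1, 1], ?_⟩,
    ⟨![1, 1, 1, 1, 1, 1, 1, -1, -1, 1], ?_⟩⟩ <;>
    simp only [evenChar, Function.Embedding.coeFn_mk, List.toFinset_cons, List.toFinset_nil,
      insert_empty_eq, sum_insert, sum_singleton, mem_insert, mem_singleton, Fin.reduceEq,
      zero_ne_one, or_self, not_false_eq_true, Matrix.cons_val, Matrix.cons_val_zero,
      Matrix.cons_val_one, one_smul, Units.neg_smul]
  · linear_combination (-h1 + h2 + h3 - h4 - h5) / 2
  · linear_combination h2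
  · linear_combination (-h1 + h2 + h3 - h4 + h5) / 2
  · linear_combination (h1 + h2 + h3 - h4 + h5) / 2
  · linear_combination -h4
  · linear_combination (-h1 + h2 - h3 - h4 + h5) / 2
  · linear_combination h5
  · linear_combination (h1 - h2 + h3 - h4 + h5) / 2
  · linear_combination (-h1 - h2 - h3 - h4 + h5) / 2
  · linear_combination (h1 - h2 - h3 - h4 + h5) / 2
  · linear_combination (-h1 - h2 - h3 - h4 - h5) / 2
  · linear_combination -h3
  · linear_combination (-h1 + h2 - h3 + h4 + h5) / 2
  · linear_combination (h1 + h2 - h3 + h4 + h5) / 2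
  · linear_combination h1

theorem IsA22Point.exists_ne_le_of_le {v : K → ℝ} (hv : IsNonarchAbsValue v) (hx : IsA22Point x)
    {M : ℝ} (hM : 0 < M) {A : List (Fin 10)} (hA : A ∈ azygousQuads) {i : Fin 10} (hi : i ∈ A)
    (hle : M ≤ v (x (evenChar i))) : ∃ j ∈ A, j ≠ i ∧ M ≤ v (x (evenChar j)) := by
  obtain ⟨ε, hε⟩ := hx.exists_signed_sum_eq_zero A hA
  have hna : IsNonarchimedean hv.1.toAbsoluteValue := hv.2
  simpa [AbsoluteValue.map_units_int_smul] using
    hna.exists_ne_le_of_sum_eq_zero hε (List.mem_toFinset.2 hi) hM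
      (by simpa [AbsoluteValue.map_units_int_smul] using hle)

end Point

/-- nonarchimedean small-coordinate estimate for points of `A₂(2)ˢ`. -/
theorem small_coordinates_nonarch {K : Type*} [Field K] [NumberField K]
    (v : K → ℝ) (hv : IsNonarchAbsValue v)
    (x : V4 → K) (hx : IsA22Point x) (hnz : ∃ m ∈ Echar, x m ≠ 0) :
    ({m | m ∈ Echar ∧ v (x m) < Echar.sup' Echar_nonempty (fun m' => v (x m'))} :
        Set V4).ncard ≤ 4 ∨
    ∃ Q : Finset V4, IsGopel Q ∧
      ({m | m ∈ Echar ∧ v (x m) < Echar.sup' Echar_nonempty (fun m' => v (x m'))} :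
        Set V4) ⊆ ↑(Echar \ Q) := by
  set M := Echar.sup' Echar_nonempty (fun m' => v (x m'))
  rcases le_or_gt {m | m ∈ Echar ∧ v (x m) < M}.ncard 4 with h4 | h5
  · exact Or.inl h4
  set p : Fin 10 → Bool := fun i => decide (M ≤ v (x (evenChar i)))
  have hM : 0 < M := by
    obtain ⟨m, hm, hxm⟩ := hnz
    exact (hv.1.toAbsoluteValue.pos hxm).trans_le (le_sup' (fun m' => v (x m')) hm)
  have hmax : ∃ i, p i := by
    obtain ⟨m, hm, hmM⟩ := exists_mem_eq_sup' Echar_nonempty (fun m' => v (x m'))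
    obtain ⟨i, -, rfl⟩ := mem_map.1 (Echar_eq_map ▸ hm)
    exact ⟨i, decide_eq_true hmM.le⟩
  have hcard : #{i | p i} ≤ 5 := by
    have hsplit := card_filter_add_card_filter_not (s := univ) (fun i => p i)
    rw [ncard_setOf_mem_Echar] at h5
    simp only [p, decide_eq_true_eq, not_le, card_univ, Fintype.card_fin] at hsplit ⊢
    omega
  obtain ⟨Q, hQ, hpQ⟩ := exists_gopelQuad_of_forall_azygousQuad p hmax hcard
    fun A hA i hi hpi => by
      simpa [p] using hx.exists_ne_le_of_le hv hM hA hi (by simpa [p] using hpi)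
  refine Or.inr ⟨Q.toFinset.map evenChar, isGopel_of_mem_gopelQuads Q hQ, ?_⟩
  rintro m ⟨hm, hmM⟩
  obtain ⟨i, -, rfl⟩ := mem_map.1 (Echar_eq_map ▸ hm)
  simp [Echar_eq_map, ← hpQ, p, hmM]
end
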